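/- arXiv:1610.04829 — 2 statements merged into one kernel-verified Lean document; each statement's English description precedes it below -/
import Mathlib

section
/- Let K, K₀ be compact Hausdorff spaces and L a compact zero-dimensional Hausdorff space. If L is a Boolean image of K and K is a continuous image of K₀ (there is a continuous surjection K₀ → K), then L is a Boolean image of K₀. Consequently, if L is a Boolean image of K, then L is a continuous image of every zero-dimensional compact Hausdorff space that maps continuously onto K. -/
open Set

/-- `φ` is an isomorphism of the family `𝒢` of subsets of `X` with a family of
pseudoclopens of the topological space `K`: `φ` is injective on `𝒢`, each `φ a`
is a pseudoclopen (a pair of a closed set contained in an open set), and for all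
finite disjoint `F, H ⊆ 𝒢` (i.e. pairwise distinct `a₁,…,aₙ,b₁,…,bₘ ∈ 𝒢`) the
two implications between vanishing of `⋂ F \ ⋃ H` and of the corresponding
combinations of the pseudoclopens hold. -/
def IsPseudoclopenIso {X K : Type*} [TopologicalSpace K]
    (𝒢 : Set (Set X)) (φ : Set X → Set K × Set K) : Prop :=
  Set.InjOn φ 𝒢 ∧
  (∀ a ∈ 𝒢, IsClosed (φ a).1 ∧ IsOpen (φ a).2 ∧ (φ a).1 ⊆ (φ a).2) ∧
  ∀ F H : Set (Set X), F.Finite → H.Finite → F ⊆ 𝒢 → H ⊆ 𝒢 → Disjoint F H →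
    ((⋂₀ F \ ⋃₀ H = ∅ → (⋂ a ∈ F, (φ a).2) \ (⋃ a ∈ H, (φ a).1) = ∅) ∧
     ((⋂ a ∈ F, (φ a).1) \ (⋃ a ∈ H, (φ a).2) = ∅ → ⋂₀ F \ ⋃₀ H = ∅))

/-- A family of subsets of `L` separates the points of `L`. -/
def SeparatesPoints' {L : Type*} (𝒢 : Set (Set L)) : Prop :=
  ∀ x y : L, x ≠ y → ∃ a ∈ 𝒢, (x ∈ a ∧ y ∉ a) ∨ (y ∈ a ∧ x ∉ a)

/-- `L` is a Boolean image of `K`: there is a point-separating family of clopen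
subsets of `L` which is isomorphic to a family of pseudoclopens of `K`. -/
def IsBooleanImage (L K : Type*) [TopologicalSpace L] [TopologicalSpace K] : Prop :=
  ∃ (𝒢 : Set (Set L)) (φ : Set L → Set K × Set K),
    (∀ a ∈ 𝒢, IsClopen a) ∧ SeparatesPoints' 𝒢 ∧ IsPseudoclopenIso 𝒢 φ

/-!
Pulling pseudoclopens back along a continuous surjection `K₀ → K` preserves every emptiness
condition, so Boolean images pass to preimages. If moreover `Z` is zero-dimensional, each
pseudoclopen `(φ a)⁻ ⊆ (φ a)⁺` can be refined to a clopen `c a` squeezed between its two halves;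
then the clopens `a ∈ 𝒢` of `L` and `c a` of `Z` realize exactly the same finite Boolean
combinations. By compactness, the maps `L → Bool^𝒢` and `Z → Bool^𝒢` recording membership
patterns then have the same image, and the first one is an embedding because `𝒢` separates points,
so the second factors through a continuous surjection `Z → L`.
-/

open Function Topology

theorem IsPseudoclopenIso.comap {X K K₀ : Type*} [TopologicalSpace K] [TopologicalSpace K₀]
    {𝒢 : Set (Set X)} {φ : Set X → Set K × Set K} (hφ : IsPseudoclopenIso 𝒢 φ)
    {f : K₀ → K} (hf : Continuous f) (hfs : Surjective f) :
    IsPseudoclopenIso 𝒢 fun a => (f ⁻¹' (φ a).1, f ⁻¹' (φ a).2) := by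
  obtain ⟨hinj, hpc, hiso⟩ := hφ
  refine ⟨fun a ha b hb hab => hinj ha hb ?_, fun a ha => ?_, fun F H hF hH hF𝒢 hH𝒢 hFH => ?_⟩
  · exact Prod.ext (hfs.preimage_injective (congrArg Prod.fst hab))
      (hfs.preimage_injective (congrArg Prod.snd hab))
  · obtain ⟨hcl, hop, hsub⟩ := hpc a ha
    exact ⟨hcl.preimage hf, hop.preimage hf, preimage_mono hsub⟩
  · have preimage_cell (u v : Set X → Set K) :
        (⋂ a ∈ F, f ⁻¹' u a) \ ⋃ a ∈ H, f ⁻¹' v a = f ⁻¹' ((⋂ a ∈ F, u a) \ ⋃ a ∈ H, v a) := by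
      simp only [preimage_sdiff, preimage_iInter₂, preimage_iUnion₂]
    have preimage_eq_empty {s : Set K} : f ⁻¹' s = ∅ ↔ s = ∅ :=
      hfs.preimage_injective.eq_iff' preimage_empty
    obtain ⟨h₁, h₂⟩ := hiso F H hF hH hF𝒢 hH𝒢 hFH
    simp only [preimage_cell, preimage_eq_empty]
    exact ⟨h₁, h₂⟩

theorem IsBooleanImage.comap {L K K₀ : Type*} [TopologicalSpace L] [TopologicalSpace K]
    [TopologicalSpace K₀] (hL : IsBooleanImage L K) {f : K₀ → K} (hf : Continuous f)
    (hfs : Surjective f) : IsBooleanImage L K₀ :=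
  let ⟨𝒢, _, hclopen, hsep, hφ⟩ := hL
  ⟨𝒢, _, hclopen, hsep, hφ.comap hf hfs⟩

section MembershipPattern

variable {ι X : Type*}

noncomputable def membershipPattern (s : ι → Set X) (x : X) (i : ι) : Bool :=
  (s i).boolIndicator x

theorem membershipPattern_eq_true_iff {s : ι → Set X} {x : X} {i : ι} :
    membershipPattern s x i = true ↔ x ∈ s i :=
  ((s i).mem_iff_boolIndicator x).symm

theorem membershipPattern_eq_iff {s : ι → Set X} {x : X} {i : ι} {b : Bool} :
    membershipPattern s x i = b ↔ (b = true → x ∈ s i) ∧ (b = false → x ∉ s i) := by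
  cases b <;> simp [← membershipPattern_eq_true_iff]

theorem continuous_membershipPattern [TopologicalSpace X] {s : ι → Set X}
    (hs : ∀ i, IsClopen (s i)) : Continuous (membershipPattern s) :=
  continuous_pi fun i => (continuous_boolIndicator_iff_isClopen _).2 (hs i)

theorem SeparatesPoints'.injective_membershipPattern {𝒢 : Set (Set X)}
    (h𝒢 : SeparatesPoints' 𝒢) : Injective (membershipPattern ((↑) : 𝒢 → Set X)) := by
  intro x y hxy
  by_contra hne
  obtain ⟨a, ha, hsep⟩ := h𝒢 x y hne
  have hmem := congrFun hxy ⟨a, ha⟩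
  rw [Bool.eq_iff_iff, membershipPattern_eq_true_iff, membershipPattern_eq_true_iff] at hmem
  tauto

theorem mem_range_membershipPattern_iff [TopologicalSpace X] [CompactSpace X]
    {s : ι → Set X} (hs : ∀ i, IsClopen (s i)) {p : ι → Bool} :
    p ∈ range (membershipPattern s) ↔
      ∀ T : Finset ι, ∃ x, ∀ i ∈ T, membershipPattern s x i = p i := by
  refine ⟨fun ⟨x, hx⟩ T => ⟨x, fun i _ => congrFun hx i⟩, fun h => ?_⟩
  have hclosed (i : ι) : IsClosed {x | membershipPattern s x i = p i} :=
    isClosed_eq ((continuous_apply i).comp (continuous_membershipPattern hs)) continuous_const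
  obtain ⟨x, -, hx⟩ := isCompact_univ.inter_iInter_nonempty _ hclosed fun T =>
    let ⟨x, hx⟩ := h T
    ⟨x, mem_univ x, mem_iInter₂.2 hx⟩
  exact ⟨x, funext fun i => mem_iInter.1 hx i⟩

end MembershipPattern

section Cells

variable {X Y : Type*} {𝒢 : Set (Set X)}

theorem mem_cell_iff (T : Finset 𝒢) (p : 𝒢 → Bool) (u v : Set X → Set Y) (y : Y) :
    y ∈ (⋂ b ∈ (↑) '' {a | a ∈ T ∧ p a = true}, u b) \
        ⋃ b ∈ (↑) '' {a | a ∈ T ∧ p a = false}, v b ↔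
      ∀ a ∈ T, (p a = true → y ∈ u a) ∧ (p a = false → y ∉ v a) := by
  simp only [biInter_image, biUnion_image, mem_sdiff, mem_iInter₂, mem_iUnion₂, mem_ofPred_eq]
  grind

theorem IsPseudoclopenIso.exists_membershipPattern_iff {K : Type*} [TopologicalSpace K]
    {φ : Set X → Set K × Set K} (hφ : IsPseudoclopenIso 𝒢 φ) {c : 𝒢 → Set K}
    (hc : ∀ a : 𝒢, (φ a).1 ⊆ c a ∧ c a ⊆ (φ a).2) (T : Finset 𝒢) (p : 𝒢 → Bool) :
    (∃ x, ∀ a ∈ T, membershipPattern ((↑) : 𝒢 → Set X) x a = p a) ↔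
      ∃ z, ∀ a ∈ T, membershipPattern c z a = p a := by
  set F := ((↑) : 𝒢 → Set X) '' {a | a ∈ T ∧ p a = true}
  set H := ((↑) : 𝒢 → Set X) '' {a | a ∈ T ∧ p a = false}
  have hfin (b : Bool) : (((↑) : 𝒢 → Set X) '' {a | a ∈ T ∧ p a = b}).Finite :=
    (T.finite_toSet.subset fun _ ha => ha.1).image _
  have h𝒢 (b : Bool) : ((↑) : 𝒢 → Set X) '' {a | a ∈ T ∧ p a = b} ⊆ 𝒢 := by
    rintro _ ⟨a, -, rfl⟩
    exact a.2
  have hFH : Disjoint F H := by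
    rw [disjoint_left]
    rintro _ ⟨a, ⟨-, ha⟩, rfl⟩ ⟨b, ⟨-, hb⟩, hba⟩
    rw [Subtype.val_injective hba, ha] at hb
    exact Bool.noConfusion hb
  obtain ⟨h₁, h₂⟩ := hφ.2.2 F H (hfin _) (hfin _) (h𝒢 _) (h𝒢 _) hFH
  rw [sInter_eq_biInter, sUnion_eq_biUnion] at h₁ h₂
  simp only [membershipPattern_eq_iff]
  constructor
  · rintro ⟨x, hx⟩
    have hxcell := (mem_cell_iff T p (fun b => b) (fun b => b) x).2 hx
    obtain ⟨z, hz⟩ := nonempty_iff_ne_empty.2 fun he => (h₂ he).subset hxcell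
    refine ⟨z, fun a ha => ?_⟩
    obtain ⟨hz₁, hz₂⟩ := (mem_cell_iff T p _ _ z).1 hz a ha
    exact ⟨fun h => (hc a).1 (hz₁ h), fun h hzc => hz₂ h ((hc a).2 hzc)⟩
  · rintro ⟨z, hz⟩
    have hzcell : z ∈ (⋂ b ∈ F, (φ b).2) \ ⋃ b ∈ H, (φ b).1 :=
      (mem_cell_iff T p _ _ z).2 fun a ha =>
        ⟨fun h => (hc a).2 ((hz a ha).1 h), fun h hzφ => (hz a ha).2 h ((hc a).1 hzφ)⟩
    obtain ⟨x, hx⟩ := nonempty_iff_ne_empty.2 fun he => (h₁ he).subset hzcell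
    exact ⟨x, (mem_cell_iff T p (fun b => b) (fun b => b) x).1 hx⟩

end Cells

theorem exists_continuous_surjective_of_range_eq {Z L Y : Type*} [TopologicalSpace Z]
    [TopologicalSpace L] [TopologicalSpace Y] {e : L → Y} {g : Z → Y} (he : IsEmbedding e)
    (hg : Continuous g) (hrange : range g = range e) :
    ∃ h : Z → L, Continuous h ∧ Surjective h := by
  choose h hh using fun z => hrange ▸ mem_range_self (f := g) z
  refine ⟨h, he.isInducing.continuous_iff.2 ?_, fun x => ?_⟩
  · simpa only [comp_def, hh] using hg
  · obtain ⟨z, hz⟩ : e x ∈ range g := hrange ▸ mem_range_self x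
    exact ⟨z, he.injective ((hh z).trans hz)⟩

theorem IsBooleanImage.exists_continuous_surjective {L Z : Type*} [TopologicalSpace L]
    [TopologicalSpace Z] [CompactSpace L] [CompactSpace Z] [T2Space Z]
    [TotallyDisconnectedSpace Z] (hL : IsBooleanImage L Z) :
    ∃ h : Z → L, Continuous h ∧ Surjective h := by
  obtain ⟨𝒢, φ, hclopen, hsep, hφ⟩ := hL
  choose c hc using fun a : 𝒢 =>
    let ⟨hcl, hop, hsub⟩ := hφ.2.1 a a.2
    exists_clopen_of_closed_subset_open hcl hop hsub
  have he : IsEmbedding (membershipPattern ((↑) : 𝒢 → Set L)) :=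
    ((continuous_membershipPattern fun a : 𝒢 => hclopen a a.2).isClosedEmbedding
      hsep.injective_membershipPattern).isEmbedding
  refine exists_continuous_surjective_of_range_eq he
    (continuous_membershipPattern fun a => (hc a).1) (Set.ext fun p => ?_)
  rw [mem_range_membershipPattern_iff fun a => (hc a).1,
    mem_range_membershipPattern_iff fun a : 𝒢 => hclopen a a.2]
  exact forall_congr' fun T => (hφ.exists_membershipPattern_iff (fun a => (hc a).2) T p).symm

theorem boolean_image_of_preimage_general {K K₀ L : Type*}
    [TopologicalSpace K] [TopologicalSpace K₀] [TopologicalSpace L]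
    [CompactSpace L]
    (hL : IsBooleanImage L K) (f : K₀ → K) (hf : Continuous f)
    (hfsurj : Function.Surjective f) :
    IsBooleanImage L K₀ ∧
      ∀ (Z : Type*) [TopologicalSpace Z] [CompactSpace Z] [T2Space Z]
        [TotallyDisconnectedSpace Z],
        (∃ g : Z → K, Continuous g ∧ Function.Surjective g) →
        ∃ h : Z → L, Continuous h ∧ Function.Surjective h := by
  refine ⟨hL.comap hf hfsurj, fun Z _ _ _ _ ⟨g, hg, hgsurj⟩ => ?_⟩
  exact (hL.comap hg hgsurj).exists_continuous_surjective

/-- If `L` is a Boolean image of `K` and `K` is a continuous image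
of `K₀`, then `L` is a Boolean image of `K₀`; consequently `L` is a continuous
image of every zero-dimensional compact Hausdorff space mapping onto `K`. -/
theorem boolean_image_of_preimage {K K₀ L : Type*}
    [TopologicalSpace K] [TopologicalSpace K₀] [TopologicalSpace L]
    [CompactSpace K] [T2Space K] [CompactSpace K₀] [T2Space K₀]
    [CompactSpace L] [T2Space L] [TotallyDisconnectedSpace L]
    (hL : IsBooleanImage L K) (f : K₀ → K) (hf : Continuous f)
    (hfsurj : Function.Surjective f) :
    IsBooleanImage L K₀ ∧
      ∀ (Z : Type*) [TopologicalSpace Z] [CompactSpace Z] [T2Space Z]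
        [TotallyDisconnectedSpace Z],
        (∃ g : Z → K, Continuous g ∧ Function.Surjective g) →
        ∃ h : Z → L, Continuous h ∧ Function.Surjective h :=
  boolean_image_of_preimage_general hL f hf hfsurj
end

section
/- Let K be a compact Hausdorff space and L a compact zero-dimensional Hausdorff space. If L is a Boolean image of K, then L is a continuous image of a closed subspace of K, i.e., there exist a closed set K₀ ⊆ K and a continuous surjection f : K₀ → L. -/
/-!
Write `a⁻ = (φ a).1` and `a⁺ = (φ a).2`, and let `K₀` be the closed set of points of `K` lying
in none of the gaps `a⁺ \ a⁻`, `a ∈ 𝒢`. Applied to the finite sign patterns of a point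
`x ∈ K`, the first isomorphism condition and the compactness of `L` give a point `g x ∈ L`
with `g x ∈ a ↔ x ∈ a⁻` for all `a ∈ 𝒢`. On `K₀` we have `a⁻ = a⁺`, so `g` pulls every
`a ∈ 𝒢` back to a clopen set; as `𝒢` separates points, `L` embeds into `Bool ^ 𝒢` and `g` is
continuous on `K₀`. Dually, the second condition and the compactness of `K` give for every
`y ∈ L` a point `x` with `x ∈ a⁻` when `y ∈ a` and `x ∉ a⁺` when `y ∉ a`; such an `x` lies in
`K₀` and `g x = y`.
-/

open Set

theorem mem_biInter_sep_sdiff_biUnion_sep_iff {ι α : Type*} {T : Set ι} {p : ι → Prop}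
    {u v : ι → Set α} {x : α} :
    x ∈ (⋂ a ∈ {a ∈ T | p a}, u a) \ ⋃ a ∈ {a ∈ T | ¬ p a}, v a ↔
      ∀ a ∈ T, (p a → x ∈ u a) ∧ (¬ p a → x ∉ v a) := by
  simp only [mem_sdiff, mem_iInter₂, mem_iUnion₂, mem_sep_iff, not_exists]
  grind

theorem nonempty_biInter_of_forall_finite {ι X : Type*} [TopologicalSpace X] [CompactSpace X]
    {𝒢 : Set ι} {D : ι → Set X} (hD : ∀ a ∈ 𝒢, IsClosed (D a))
    (hfin : ∀ T ⊆ 𝒢, T.Finite → (⋂ a ∈ T, D a).Nonempty) : (⋂ a ∈ 𝒢, D a).Nonempty := by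
  have := isCompact_univ.inter_iInter_nonempty (fun a : 𝒢 => D a) (fun a => hD a a.2)
    fun u => by
      simpa only [univ_inter, biInter_image, Finset.mem_coe] using
        hfin (Subtype.val '' (u : Set 𝒢)) (by simp) (u.finite_toSet.image _)
  rwa [univ_inter, iInter_subtype] at this

theorem SeparatesPoints'.eq_of_forall_mem_iff {L : Type*} {𝒢 : Set (Set L)}
    (hsep : SeparatesPoints' 𝒢) {y₁ y₂ : L} (h : ∀ a ∈ 𝒢, y₁ ∈ a ↔ y₂ ∈ a) : y₁ = y₂ := by
  by_contra hne
  obtain ⟨a, ha, ⟨h₁, h₂⟩ | ⟨h₂, h₁⟩⟩ := hsep y₁ y₂ hne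
  · exact h₂ ((h a ha).1 h₁)
  · exact h₁ ((h a ha).2 h₂)

theorem continuous_of_isClopen_preimage {Y L : Type*} [TopologicalSpace Y] [TopologicalSpace L]
    [CompactSpace L] {𝒢 : Set (Set L)} (hclopen : ∀ a ∈ 𝒢, IsClopen a)
    (hsep : SeparatesPoints' 𝒢) {f : Y → L} (hf : ∀ a ∈ 𝒢, IsClopen (f ⁻¹' a)) :
    Continuous f := by
  let ψ : L → 𝒢 → Bool := fun y a => (a : Set L).boolIndicator y
  have hψ : Continuous ψ :=
    continuous_pi fun a => (continuous_boolIndicator_iff_isClopen _).2 (hclopen a a.2)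
  have hinj : ψ.Injective := fun y₁ y₂ h => hsep.eq_of_forall_mem_iff fun a ha => by
    simpa [ψ, Set.boolIndicator] using congrFun h ⟨a, ha⟩
  exact (hψ.isClosedEmbedding hinj).isEmbedding.continuous_iff.2 <|
    continuous_pi fun a => (continuous_boolIndicator_iff_isClopen _).2 (hf a a.2)

namespace IsPseudoclopenIso

variable {X K : Type*} {𝒢 : Set (Set X)} {φ : Set X → Set K × Set K}

def gapFreeSet (𝒢 : Set (Set X)) (φ : Set X → Set K × Set K) : Set K :=
  ⋂ a ∈ 𝒢, ((φ a).2 \ (φ a).1)ᶜ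

theorem mem_gapFreeSet {x : K} :
    x ∈ gapFreeSet 𝒢 φ ↔ ∀ a ∈ 𝒢, x ∈ (φ a).2 → x ∈ (φ a).1 := by
  simp [gapFreeSet]

variable [TopologicalSpace K]

theorem isClosed_fst (hφ : IsPseudoclopenIso 𝒢 φ) {a : Set X} (ha : a ∈ 𝒢) :
    IsClosed (φ a).1 :=
  (hφ.2.1 a ha).1

theorem isOpen_snd (hφ : IsPseudoclopenIso 𝒢 φ) {a : Set X} (ha : a ∈ 𝒢) : IsOpen (φ a).2 :=
  (hφ.2.1 a ha).2.1

theorem fst_subset_snd (hφ : IsPseudoclopenIso 𝒢 φ) {a : Set X} (ha : a ∈ 𝒢) :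
    (φ a).1 ⊆ (φ a).2 :=
  (hφ.2.1 a ha).2.2

theorem sep_conditions (hφ : IsPseudoclopenIso 𝒢 φ) {T : Set (Set X)} (hT : T.Finite)
    (hT𝒢 : T ⊆ 𝒢) (p : Set X → Prop) :
    (⋂₀ {a ∈ T | p a} \ ⋃₀ {a ∈ T | ¬ p a} = ∅ →
        (⋂ a ∈ {a ∈ T | p a}, (φ a).2) \ (⋃ a ∈ {a ∈ T | ¬ p a}, (φ a).1) = ∅) ∧
      ((⋂ a ∈ {a ∈ T | p a}, (φ a).1) \ (⋃ a ∈ {a ∈ T | ¬ p a}, (φ a).2) = ∅ →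
        ⋂₀ {a ∈ T | p a} \ ⋃₀ {a ∈ T | ¬ p a} = ∅) :=
  hφ.2.2 _ _ (hT.subset (sep_subset T _)) (hT.subset (sep_subset T _))
    ((sep_subset T _).trans hT𝒢) ((sep_subset T _).trans hT𝒢)
    (disjoint_left.2 fun _ ha hb => hb.2 ha.2)

theorem exists_forall_mem_iff_mem_fst_of_finite (hφ : IsPseudoclopenIso 𝒢 φ)
    {T : Set (Set X)} (hT : T.Finite) (hT𝒢 : T ⊆ 𝒢) (x : K) :
    ∃ y : X, ∀ a ∈ T, y ∈ a ↔ x ∈ (φ a).1 := by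
  have hx : x ∈ (⋂ a ∈ {a ∈ T | x ∈ (φ a).1}, (φ a).2) \ ⋃ a ∈ {a ∈ T | x ∉ (φ a).1}, (φ a).1 :=
    mem_biInter_sep_sdiff_biUnion_sep_iff.2 fun a ha =>
      ⟨fun h => hφ.fst_subset_snd (hT𝒢 ha) h, id⟩
  obtain ⟨y, hy⟩ := nonempty_iff_ne_empty.2 fun h =>
    (hφ.sep_conditions hT hT𝒢 (fun a => x ∈ (φ a).1)).1 h |>.subset hx
  rw [sInter_eq_biInter, sUnion_eq_biUnion, mem_biInter_sep_sdiff_biUnion_sep_iff] at hy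
  exact ⟨y, fun a ha => ⟨fun h => by_contra fun hx => (hy a ha).2 hx h, (hy a ha).1⟩⟩

theorem exists_mem_fst_notMem_snd_of_finite (hφ : IsPseudoclopenIso 𝒢 φ)
    {T : Set (Set X)} (hT : T.Finite) (hT𝒢 : T ⊆ 𝒢) (y : X) :
    ∃ x : K, ∀ a ∈ T, (y ∈ a → x ∈ (φ a).1) ∧ (y ∉ a → x ∉ (φ a).2) := by
  have hy : y ∈ ⋂₀ {a ∈ T | y ∈ a} \ ⋃₀ {a ∈ T | y ∉ a} := by
    rw [sInter_eq_biInter, sUnion_eq_biUnion, mem_biInter_sep_sdiff_biUnion_sep_iff]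
    exact fun a _ => ⟨id, id⟩
  obtain ⟨x, hx⟩ := nonempty_iff_ne_empty.2 fun h =>
    (hφ.sep_conditions hT hT𝒢 (fun a => y ∈ a)).2 h |>.subset hy
  exact ⟨x, mem_biInter_sep_sdiff_biUnion_sep_iff.1 hx⟩

theorem exists_forall_mem_iff_mem_fst [TopologicalSpace X] [CompactSpace X]
    (hφ : IsPseudoclopenIso 𝒢 φ) (hclopen : ∀ a ∈ 𝒢, IsClopen a) (x : K) :
    ∃ y : X, ∀ a ∈ 𝒢, y ∈ a ↔ x ∈ (φ a).1 := by
  have hclosed : ∀ a ∈ 𝒢, IsClosed {y : X | y ∈ a ↔ x ∈ (φ a).1} := fun a ha => by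
    by_cases hx : x ∈ (φ a).1
    · simpa [hx] using (hclopen a ha).isClosed
    · simp only [hx, iff_false]
      exact (hclopen a ha).compl.isClosed
  obtain ⟨y, hy⟩ := nonempty_biInter_of_forall_finite hclosed fun T hT𝒢 hT => by
    simpa only [nonempty_def, mem_iInter₂, mem_ofPred_eq] using
      hφ.exists_forall_mem_iff_mem_fst_of_finite hT hT𝒢 x
  exact ⟨y, mem_iInter₂.1 hy⟩

theorem isClosed_gapFreeSet (hφ : IsPseudoclopenIso 𝒢 φ) : IsClosed (gapFreeSet 𝒢 φ) :=
  isClosed_biInter fun _ ha => ((hφ.isOpen_snd ha).sdiff (hφ.isClosed_fst ha)).isClosed_compl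

theorem exists_mem_gapFreeSet_forall_mem_fst_iff [CompactSpace K]
    (hφ : IsPseudoclopenIso 𝒢 φ) (y : X) :
    ∃ x ∈ gapFreeSet 𝒢 φ, ∀ a ∈ 𝒢, x ∈ (φ a).1 ↔ y ∈ a := by
  have hclosed : ∀ a ∈ 𝒢,
      IsClosed {x : K | (y ∈ a → x ∈ (φ a).1) ∧ (y ∉ a → x ∉ (φ a).2)} := fun a ha => by
    by_cases hy : y ∈ a
    · simpa [hy] using hφ.isClosed_fst ha
    · simp only [hy, false_imp_iff, true_and, not_false_eq_true, forall_const]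
      exact (hφ.isOpen_snd ha).isClosed_compl
  obtain ⟨x, hx⟩ := nonempty_biInter_of_forall_finite hclosed fun T hT𝒢 hT => by
    simpa only [nonempty_def, mem_iInter₂, mem_ofPred_eq] using
      hφ.exists_mem_fst_notMem_snd_of_finite hT hT𝒢 y
  simp only [mem_iInter₂, mem_ofPred_eq] at hx
  refine ⟨x, mem_gapFreeSet.2 fun a ha hxa => ?_, fun a ha => ⟨fun hxa => ?_, (hx a ha).1⟩⟩
  · exact (hx a ha).1 (by_contra fun hy => (hx a ha).2 hy hxa)
  · exact by_contra fun hy => (hx a ha).2 hy (hφ.fst_subset_snd ha hxa)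

theorem isClopen_preimage_restrict (hφ : IsPseudoclopenIso 𝒢 φ) {g : K → X}
    (hg : ∀ x, ∀ a ∈ 𝒢, g x ∈ a ↔ x ∈ (φ a).1) {a : Set X} (ha : a ∈ 𝒢) :
    IsClopen ((fun x : gapFreeSet 𝒢 φ => g x) ⁻¹' a) := by
  have hfst : (fun x : gapFreeSet 𝒢 φ => g x) ⁻¹' a = Subtype.val ⁻¹' (φ a).1 :=
    ext fun x => hg x a ha
  have hsnd : (fun x : gapFreeSet 𝒢 φ => g x) ⁻¹' a = Subtype.val ⁻¹' (φ a).2 :=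
    hfst.trans <| ext fun x =>
      ⟨fun h => hφ.fst_subset_snd ha h, mem_gapFreeSet.1 x.2 a ha⟩
  exact ⟨hfst ▸ (hφ.isClosed_fst ha).preimage continuous_subtype_val,
    hsnd ▸ (hφ.isOpen_snd ha).preimage continuous_subtype_val⟩

end IsPseudoclopenIso

theorem continuous_image_of_closed_subspace_general {K L : Type*}
    [TopologicalSpace K] [CompactSpace K]
    [TopologicalSpace L] [CompactSpace L]
    (hL : IsBooleanImage L K) :
    ∃ K₀ : Set K, IsClosed K₀ ∧ ∃ f : K₀ → L, Continuous f ∧ Function.Surjective f := by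
  obtain ⟨𝒢, φ, hclopen, hsep, hφ⟩ := hL
  choose g hg using hφ.exists_forall_mem_iff_mem_fst hclopen
  refine ⟨IsPseudoclopenIso.gapFreeSet 𝒢 φ, hφ.isClosed_gapFreeSet, fun x => g x,
    continuous_of_isClopen_preimage hclopen hsep fun a ha => hφ.isClopen_preimage_restrict hg ha,
    fun y => ?_⟩
  obtain ⟨x, hx₀, hx⟩ := hφ.exists_mem_gapFreeSet_forall_mem_fst_iff y
  exact ⟨⟨x, hx₀⟩, hsep.eq_of_forall_mem_iff fun a ha => (hg x a ha).trans (hx a ha)⟩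

/-- If `L` is a Boolean image of `K`, then `L` is a continuous
image of a closed subspace of `K`. -/
theorem continuous_image_of_closed_subspace {K L : Type*}
    [TopologicalSpace K] [CompactSpace K] [T2Space K]
    [TopologicalSpace L] [CompactSpace L] [T2Space L] [TotallyDisconnectedSpace L]
    (hL : IsBooleanImage L K) :
    ∃ K₀ : Set K, IsClosed K₀ ∧ ∃ f : K₀ → L, Continuous f ∧ Function.Surjective f :=
  continuous_image_of_closed_subspace_general hL
end
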